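/- Let {f_η}_{η ∈ S_λ} and {g_η}_{η ∈ S_λ} both be KZ families (indexed by the rearrangements of the same partition λ). Suppose there is a rational function h in x₁,…,xₙ over ℚ(t) that is symmetric in x₁,…,xₙ such that g_λ = h·f_λ (where λ itself is regarded as the element of S_λ with weakly decreasing entries). Then g_η = h·f_η for every η ∈ S_λ. -/

import Mathlib

/-!
Multiplication by a function invariant under `s_i` commutes with `T_i`, and every `η ∈ S_λ` is
reached from `λ` by a chain of moves `η ↦ s_i η` at descents `η_i > η_{i+1}`, along which both
families obey `f_{s_i η} = T_i f_η`. Induction on the potential `∑ⱼ j·ηⱼ`, which drops when an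
ascent is undone, carries `g_η = h·f_η` from `η = λ` to all of `S_λ`.
-/

open MvPolynomial

set_option maxHeartbeats 1000000
set_option synthInstance.maxHeartbeats 400000
set_option maxRecDepth 10000

noncomputable section

/-- The field `ℚ(t)` of rational functions in `t`. -/
abbrev Kt : Type := RatFunc ℚ

/-- The element `t` of `ℚ(t)`. -/
def tK : Kt := RatFunc.X

/-- The polynomial ring `ℚ(t)[x₁,…,xₙ]`. -/
abbrev Rt (n : ℕ) : Type := MvPolynomial (Fin n) Kt

/-- The field of rational functions in `x₁,…,xₙ` over `ℚ(t)`. -/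
abbrev Ft (n : ℕ) : Type := FractionRing (Rt n)

/-- The canonical embedding of polynomials into rational functions. -/
def toF (n : ℕ) : Rt n →+* Ft n := algebraMap (Rt n) (Ft n)

/-- The variable `x_i` (1-based: `x_i` is the variable of index `i-1`). -/
def xF (n : ℕ) (i : Fin n) : Ft n := toF n (X i)

/-- The scalar `t` as a rational function. -/
def tF (n : ℕ) : Ft n := toF n (C tK)

/-- The transposition of the (1-based) variables `x_i` and `x_{i+1}`. -/
def swapPerm (n i : ℕ) : Equiv.Perm (Fin n) :=
  if h : 1 ≤ i ∧ i < n then Equiv.swap ⟨i - 1, by omega⟩ ⟨i, h.2⟩ else Equiv.refl _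

/-- A permutation of the variables `x₁,…,xₙ`, as a field automorphism of the field
of rational functions. -/
def permF (n : ℕ) (σ : Equiv.Perm (Fin n)) : Ft n ≃+* Ft n :=
  IsFractionRing.ringEquivOfRingEquiv (renameEquiv Kt σ).toRingEquiv

/-- The operator `s_i`, interchanging the variables `x_i` and `x_{i+1}`. -/
def sOp (n i : ℕ) : Ft n ≃+* Ft n := permF n (swapPerm n i)

/-- The operator `L_i f = ((t·x_i − x_{i+1})/(x_i − x_{i+1}))·(f − s_i f)`
(for `1 ≤ i ≤ n−1`). -/
def LOp (n i : ℕ) (f : Ft n) : Ft n :=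
  if h : 1 ≤ i ∧ i < n then
    ((tF n * xF n ⟨i - 1, by omega⟩ - xF n ⟨i, h.2⟩) /
        (xF n ⟨i - 1, by omega⟩ - xF n ⟨i, h.2⟩)) * (f - sOp n i f)
  else 0

/-- The Demazure–Lusztig operator `T_i f = t·f − L_i f`. -/
def TOp (n i : ℕ) (f : Ft n) : Ft n := tF n * f - LOp n i f

/-- The set `S_λ` of compositions obtained by permuting the parts of `lam`. -/
def SLam (n : ℕ) (lam : Fin n → ℕ) : Finset (Fin n → ℕ) :=
  Finset.image (fun σ : Equiv.Perm (Fin n) => lam ∘ σ) Finset.univ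

/-- The cyclic shift `(η₁,…,ηₙ) ↦ (ηₙ,η₁,…,η_{n−1})` of a composition. -/
def cycComp (n : ℕ) [NeZero n] (η : Fin n → ℕ) : Fin n → ℕ := fun j => η (j - 1)

/-- The composition `η` with its entries at the (1-based) positions `i` and `i+1`
interchanged. -/
def sEta (n i : ℕ) (η : Fin n → ℕ) : Fin n → ℕ := η ∘ (swapPerm n i)

/-- The KZ relations (the qKZ relations at `q = 1`) for a family `{f_η}_{η ∈ S_ν}`
of polynomials in `x₁,…,xₙ` with coefficients in `ℚ(t)`:
`T_i f_η = f_{s_i η}` when `η_i > η_{i+1}`, `T_i f_η = t·f_η` when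
`η_i = η_{i+1}`, and `f_η(x₁,…,xₙ) = f_{(ηₙ,η₁,…,η_{n−1})}(xₙ,x₁,…,x_{n−1})`. -/
def KZRel (n : ℕ) [NeZero n] (nu : Fin n → ℕ) (f : (Fin n → ℕ) → Rt n) : Prop :=
  (∀ η ∈ SLam n nu, ∀ (i : ℕ) (_ : 1 ≤ i) (hin : i < n),
    η ⟨i, hin⟩ < η ⟨i - 1, by omega⟩ →
      TOp n i (toF n (f η)) = toF n (f (sEta n i η))) ∧
  (∀ η ∈ SLam n nu, ∀ (i : ℕ) (_ : 1 ≤ i) (hin : i < n),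
    η ⟨i - 1, by omega⟩ = η ⟨i, hin⟩ →
      TOp n i (toF n (f η)) = tF n * toF n (f η)) ∧
  (∀ η ∈ SLam n nu,
    f η = rename (fun j : Fin n => j - 1) (f (cycComp n η)))

/-- A KZ family: a family of homogeneous polynomials of degree `|ν|` satisfying the
KZ relations. -/
def IsKZ (n : ℕ) [NeZero n] (nu : Fin n → ℕ) (f : (Fin n → ℕ) → Rt n) : Prop :=
  (∀ η ∈ SLam n nu, (f η).IsHomogeneous (∑ i, nu i)) ∧ KZRel n nu f

def positionWeight (n : ℕ) (η : Fin n → ℕ) : ℕ := ∑ j : Fin n, (j : ℕ) * η j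

lemma swapPerm_of_lt {n i : ℕ} (hi : 1 ≤ i) (hin : i < n) :
    swapPerm n i = Equiv.swap ⟨i - 1, by omega⟩ ⟨i, hin⟩ := by
  rw [swapPerm, dif_pos ⟨hi, hin⟩]

lemma sEta_apply_left {n i : ℕ} (hi : 1 ≤ i) (hin : i < n) (η : Fin n → ℕ) :
    sEta n i η ⟨i - 1, by omega⟩ = η ⟨i, hin⟩ := by
  simp [sEta, swapPerm_of_lt hi hin]

lemma sEta_apply_right {n i : ℕ} (hi : 1 ≤ i) (hin : i < n) (η : Fin n → ℕ) :
    sEta n i η ⟨i, hin⟩ = η ⟨i - 1, by omega⟩ := by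
  simp [sEta, swapPerm_of_lt hi hin]

lemma sEta_sEta {n i : ℕ} (hi : 1 ≤ i) (hin : i < n) (η : Fin n → ℕ) :
    sEta n i (sEta n i η) = η := by
  funext j
  simp [sEta, swapPerm_of_lt hi hin]

lemma sEta_mem_SLam {n i : ℕ} {lam η : Fin n → ℕ} (hη : η ∈ SLam n lam) :
    sEta n i η ∈ SLam n lam := by
  obtain ⟨σ, -, rfl⟩ := Finset.mem_image.mp hη
  exact Finset.mem_image.mpr ⟨(swapPerm n i).trans σ, Finset.mem_univ _, rfl⟩

lemma eq_of_mem_SLam_of_antitone {n : ℕ} {lam η : Fin n → ℕ} (hlam : Antitone lam)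
    (hη : η ∈ SLam n lam) (hanti : Antitone η) : η = lam := by
  obtain ⟨σ, -, rfl⟩ := Finset.mem_image.mp hη
  exact Tuple.unique_antitone (σ := σ) (τ := 1) hanti hlam

lemma exists_ascent_of_not_antitone {α : Type*} [LinearOrder α] {n : ℕ} {η : Fin n → α}
    (hη : ¬ Antitone η) :
    ∃ (i : ℕ) (hi : 1 ≤ i) (hin : i < n), η ⟨i - 1, by omega⟩ < η ⟨i, hin⟩ := by
  obtain _ | m := n
  · exact absurd (Subsingleton.antitone η) hη
  · rw [Fin.antitone_iff_succ_le] at hη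
    simp only [not_forall, not_le] at hη
    obtain ⟨k, hk⟩ := hη
    exact ⟨k + 1, by omega, by omega, hk⟩

lemma positionWeight_sEta_lt {n i : ℕ} (hi : 1 ≤ i) (hin : i < n) {η : Fin n → ℕ}
    (hasc : η ⟨i - 1, by omega⟩ < η ⟨i, hin⟩) :
    positionWeight n (sEta n i η) < positionWeight n η := by
  set a : Fin n := ⟨i - 1, by omega⟩
  set b : Fin n := ⟨i, hin⟩
  have hab : a ≠ b := by simp only [a, b, ne_eq, Fin.mk.injEq]; omega
  have hb : b ∈ Finset.univ.erase a := Finset.mem_erase.mpr ⟨hab.symm, Finset.mem_univ _⟩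
  have hrest : ∀ j ∈ (Finset.univ.erase a).erase b, (j : ℕ) * sEta n i η j = j * η j := by
    intro j hj
    obtain ⟨hjb, hja, -⟩ := by simpa only [Finset.mem_erase] using hj
    rw [sEta, Function.comp_apply, swapPerm_of_lt hi hin, Equiv.swap_apply_of_ne_of_ne hja hjb]
  unfold positionWeight
  rw [← Finset.add_sum_erase _ _ (Finset.mem_univ a), ← Finset.add_sum_erase _ _ hb,
    ← Finset.add_sum_erase _ (fun j : Fin n => (j : ℕ) * η j) (Finset.mem_univ a),
    ← Finset.add_sum_erase _ (fun j : Fin n => (j : ℕ) * η j) hb,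
    sEta_apply_left hi hin, sEta_apply_right hi hin, Finset.sum_congr rfl hrest]
  have hba : (b : ℕ) = a + 1 := by simp only [a, b]; omega
  rw [hba]
  nlinarith [hasc]

theorem SLam.induction_on_descent {n : ℕ} {lam : Fin n → ℕ} (hlam : Antitone lam)
    {P : (Fin n → ℕ) → Prop} (base : P lam)
    (step : ∀ η ∈ SLam n lam, ∀ (i : ℕ) (hi : 1 ≤ i) (hin : i < n),
      η ⟨i, hin⟩ < η ⟨i - 1, by omega⟩ → P η → P (sEta n i η)) :
    ∀ η ∈ SLam n lam, P η := by
  intro η hη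
  induction hw : positionWeight n η using Nat.strong_induction_on generalizing η with
  | _ w ih =>
    by_cases hanti : Antitone η
    · rwa [eq_of_mem_SLam_of_antitone hlam hη hanti]
    obtain ⟨i, hi, hin, hasc⟩ := exists_ascent_of_not_antitone hanti
    have hdesc : sEta n i η ⟨i, hin⟩ < sEta n i η ⟨i - 1, by omega⟩ := by
      rwa [sEta_apply_left hi hin, sEta_apply_right hi hin]
    have hprev : P (sEta n i η) :=
      ih _ (hw ▸ positionWeight_sEta_lt hi hin hasc) _ (sEta_mem_SLam hη) rfl
    simpa only [sEta_sEta hi hin] using step _ (sEta_mem_SLam hη) i hi hin hdesc hprev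

lemma TOp_mul_of_sOp_eq {n i : ℕ} {h : Ft n} (hh : sOp n i h = h) (f : Ft n) :
    TOp n i (h * f) = h * TOp n i f := by
  unfold TOp LOp
  split_ifs
  · rw [map_mul, hh]; ring
  · ring

/-- Lemma 4.4 of the paper: if `{f_η}` and `{g_η}` are KZ families indexed by the
rearrangements of the same partition `λ`, and the ratio `h = g_λ/f_λ` of the
partition-indexed terms is a symmetric rational function of `x₁,…,xₙ`, then
`g_η = h·f_η` for every `η ∈ S_λ`. -/
theorem stmt_11 (n : ℕ) [NeZero n] (lam : Fin n → ℕ)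
    (hlam : ∀ i j : Fin n, i ≤ j → lam j ≤ lam i)
    (f g : (Fin n → ℕ) → Rt n) (hf : IsKZ n lam f) (hg : IsKZ n lam g)
    (h : Ft n) (hsym : ∀ σ : Equiv.Perm (Fin n), permF n σ h = h)
    (hratio : toF n (g lam) = h * toF n (f lam)) :
    ∀ η ∈ SLam n lam, toF n (g η) = h * toF n (f η) := by
  obtain ⟨-, hfT, -, -⟩ := hf
  obtain ⟨-, hgT, -, -⟩ := hg
  refine SLam.induction_on_descent hlam hratio ?_
  intro η hη i hi hin hdesc ih
  calc toF n (g (sEta n i η)) = TOp n i (toF n (g η)) := (hgT η hη i hi hin hdesc).symm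
    _ = h * TOp n i (toF n (f η)) := by rw [ih, TOp_mul_of_sOp_eq (hsym _)]
    _ = h * toF n (f (sEta n i η)) := by rw [hfT η hη i hi hin hdesc]

end
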